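/- Let N ≥ 1, let L be a real number, and let x = (x_1,…,x_{2N}) be positive reals satisfying the highest weight condition and Σ_{j=1}^{2N} x_j ≤ L. Apply Algorithm B to x, producing the data (μ^{(i)}, ν^{(i)})_{1≤i≤u}, the intermediate sequences y^{(i)}, and set λ^{(i)} := μ^{(1)} + ⋯ + μ^{(i)}. For each 1 ≤ i ≤ u, let the maximal runs of zeros of y^{(i)} begin at positions I^{(i)}_1 < ⋯ < I^{(i)}_{k^{(i)}}, and define the quantum numbers r^{(i)}_j := Σ_{l=1}^{I^{(i)}_j − 1} y^{(i)}_l. Define the vacancy numbers q_i := L − 2 Σ_{k=1}^{u} min(λ^{(i)}, λ^{(k)}) ν^{(k)}. Then for every 1 ≤ i ≤ u and every 1 ≤ j ≤ k^{(i)} one has 0 ≤ r^{(i)}_j ≤ q_i. -/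

import Mathlib

/-- A finite sequence of nonnegative reals (as a list, 0-indexed) satisfies the
*highest weight condition* if `∑_{i=1}^{k} (x_{2i-1} - x_{2i}) ≥ 0` for all `k`. -/
def HWC (l : List ℝ) : Prop :=
  ∀ k : ℕ, 2 * k ≤ l.length →
    0 ≤ ∑ j ∈ Finset.range k, (l.getD (2 * j) 0 - l.getD (2 * j + 1) 0)

/-- One pass of zero-elimination on a list of nonnegative reals whose first entry is
positive, processed with explicit fuel (fuel `≥` the length of the list always
suffices).  A trailing run of zeros is deleted together with, if its length is odd, the
positive entry immediately preceding it (returned as the second component); an interior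
run of zeros of even length is deleted; an interior run of zeros of odd length is merged
together with its positive neighbours `a, b` into the single entry `a + b`. -/
noncomputable def squashF : ℕ → List ℝ → List ℝ × ℝ
  | 0, _ => ([], 0)
  | _ + 1, [] => ([], 0)
  | fuel + 1, a :: rest =>
    let m := (rest.takeWhile (fun t => decide (t = 0))).length
    let r := rest.drop m
    if r = [] then (if Even m then ([a], 0) else ([], a))
    else if Even m then
      let p := squashF fuel (r.headI :: r.tail)
      (a :: p.1, p.2)
    else squashF fuel ((a + r.headI) :: r.tail)

/-- Delete the run of zeros at the left end of `y`, then eliminate all remaining runs of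
zeros; returns the resulting list together with the positive entry deleted at the right
end (`0` if no entry was deleted there). -/
noncomputable def contract (y : List ℝ) : List ℝ × ℝ :=
  let y' := y.drop ((y.takeWhile (fun t => decide (t = 0))).length)
  squashF y'.length y'

/-- The minimum entry of a nonempty list of reals. -/
noncomputable def minL (l : List ℝ) : ℝ := l.foldr min l.headI

/-- One step of Algorithm B: subtract the minimum `μ` from every entry and eliminate the
runs of zeros, the positive entry preceding an odd right-end run of zeros being simply
deleted. -/
noncomputable def stepB (x : List ℝ) : List ℝ :=
  (contract (x.map (fun t => t - minL x))).1

/-- `iterB x (i-1)` is the `i`-th sequence `x⁽ⁱ⁾` of Algorithm B (so `iterB x 0 = x`). -/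
noncomputable def iterB (x : List ℝ) : ℕ → List ℝ
  | 0 => x
  | i + 1 => stepB (iterB x i)

/-- `μ⁽ⁱ⁾`, the minimum entry of `x⁽ⁱ⁾` (1-indexed step `i`). -/
noncomputable def muI (x : List ℝ) (i : ℕ) : ℝ := minL (iterB x (i - 1))

/-- `y⁽ⁱ⁾ = x⁽ⁱ⁾ - μ⁽ⁱ⁾` (1-indexed step `i`). -/
noncomputable def yI (x : List ℝ) (i : ℕ) : List ℝ :=
  (iterB x (i - 1)).map (fun t => t - muI x i)

/-- `ν⁽ⁱ⁾ = N⁽ⁱ⁾ - N⁽ⁱ⁺¹⁾` (1-indexed step `i`). -/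
noncomputable def nuI (x : List ℝ) (i : ℕ) : ℕ :=
  (iterB x (i - 1)).length / 2 - (iterB x i).length / 2

/-- `λ⁽ⁱ⁾ = μ⁽¹⁾ + ⋯ + μ⁽ⁱ⁾`. -/
noncomputable def lamI (x : List ℝ) (i : ℕ) : ℝ :=
  ∑ j ∈ Finset.range i, minL (iterB x j)

/-- The number `u` of steps of Algorithm B: the least `u` with `x⁽ᵘ⁺¹⁾` empty. -/
noncomputable def uSteps (x : List ℝ) : ℕ := sInf {i | iterB x i = []}

/-- The (0-based) starting positions of the maximal runs of zeros of `y`. -/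
noncomputable def runStarts (y : List ℝ) : Finset ℕ :=
  (Finset.range y.length).filter
    (fun p => y.getD p 1 = 0 ∧ (p = 0 ∨ y.getD (p - 1) 1 ≠ 0))

/-- The vacancy number `q_i = L - 2 ∑_{k=1}^{u} min(λ⁽ⁱ⁾, λ⁽ᵏ⁾) ν⁽ᵏ⁾`. -/
noncomputable def vacancy (x : List ℝ) (L : ℝ) (i : ℕ) : ℝ :=
  L - 2 * ∑ k ∈ Finset.Icc 1 (uSteps x), min (lamI x i) (lamI x k) * (nuI x k : ℝ)

/-!
Every entry of `y⁽ⁱ⁾` is nonnegative, so each quantum number is at most `∑ y⁽ⁱ⁾`. A step of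
Algorithm B subtracts `μ⁽ʲ⁾` from all `|x⁽ʲ⁾|` entries and afterwards only deletes entries or
merges them by addition, so `∑ x⁽ʲ⁺¹⁾ ≤ ∑ x⁽ʲ⁾ - |x⁽ʲ⁾| μ⁽ʲ⁾`, whence
`∑ y⁽ⁱ⁾ ≤ L - ∑_{j ≤ i} |x⁽ʲ⁾| μ⁽ʲ⁾`. On the other side, since `λ` is monotone,
`min (λ⁽ⁱ⁾, λ⁽ᵏ⁾) = λ⁽ᵐⁱⁿ⁽ⁱ,ᵏ⁾⁾`, and exchanging the order of summation gives
`∑_k min (λ⁽ⁱ⁾, λ⁽ᵏ⁾) ν⁽ᵏ⁾ = ∑_{j ≤ i} μ⁽ʲ⁾ ∑_{k ≥ j} ν⁽ᵏ⁾ ≤ ∑_{j ≤ i} μ⁽ʲ⁾ N⁽ʲ⁾`, the tail sums of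
`ν` telescoping to at most `N⁽ʲ⁾ = |x⁽ʲ⁾| / 2`.
-/

open Finset

theorem Antitone.sum_Ioc_tsub_le {n : ℕ → ℕ} (hn : Antitone n) (j u : ℕ) :
    ∑ k ∈ Ioc j u, (n (k - 1) - n k) ≤ n j - n u := by
  induction u with
  | zero => simp
  | succ u ih =>
    rcases le_or_gt j u with h | h
    · rw [sum_Ioc_succ_top h, Nat.add_sub_cancel]
      have := hn h
      have := hn (by omega : u ≤ u + 1)
      omega
    · simp [Ioc_eq_empty (by omega : ¬j < u + 1)]

theorem sum_min_partialSum_mul_tsub_le {R : Type*} [CommRing R] [LinearOrder R]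
    [IsStrictOrderedRing R] {m : ℕ → R} (hm : ∀ j, 0 ≤ m j) {n : ℕ → ℕ} (hn : Antitone n)
    (i u : ℕ) :
    ∑ k ∈ Icc 1 u, min (∑ j ∈ range i, m j) (∑ j ∈ range k, m j) * ((n (k - 1) - n k : ℕ) : R)
      ≤ ∑ j ∈ range i, m j * n j := by
  have hmono : Monotone fun k => ∑ j ∈ range k, m j :=
    (sum_mono_set_of_nonneg hm).comp range_mono
  calc _ = ∑ k ∈ Icc 1 u, ∑ j ∈ range (min i k), m j * ((n (k - 1) - n k : ℕ) : R) := by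
        refine sum_congr rfl fun k _ => ?_
        rw [← sum_mul, ← hmono.map_min]
    _ = ∑ j ∈ range i, ∑ k ∈ Ioc j u, m j * ((n (k - 1) - n k : ℕ) : R) :=
        sum_comm' fun k j => by simp only [mem_Icc, mem_range, mem_Ioc]; omega
    _ = ∑ j ∈ range i, m j * ((∑ k ∈ Ioc j u, (n (k - 1) - n k) : ℕ) : R) := by
        simp only [mul_sum, Nat.cast_sum]
    _ ≤ _ := sum_le_sum fun j _ => mul_le_mul_of_nonneg_left
        (by exact_mod_cast (hn.sum_Ioc_tsub_le j u).trans tsub_le_self) (hm j)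

theorem List.sum_map_sub_const {R : Type*} [CommRing R] (l : List R) (c : R) :
    (l.map (· - c)).sum = l.sum - l.length * c := by
  induction l with
  | nil => simp
  | cons a l ih => simp only [List.map_cons, List.sum_cons, List.length_cons, ih]; push_cast; ring

theorem squashF_fst_spec (fuel : ℕ) (l : List ℝ) (hl : ∀ t ∈ l, 0 ≤ t) :
    (∀ t ∈ (squashF fuel l).1, 0 ≤ t) ∧ (squashF fuel l).1.sum ≤ l.sum ∧
      (squashF fuel l).1.length ≤ l.length := by
  fun_induction squashF fuel l with
  | case1 | case2 => simp [List.sum_nonneg hl]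
  | case3 | case4 =>
    obtain ⟨ha, hrest⟩ := List.forall_mem_cons.1 hl
    simp [ha, List.sum_nonneg hrest, add_nonneg]
  | case5 fuel a rest m r hr _ p ih =>
    obtain ⟨ha, hrest⟩ := List.forall_mem_cons.1 hl
    obtain ⟨b, rt, hbr⟩ := List.exists_cons_of_ne_nil hr
    have hsub : List.Sublist (b :: rt) rest := hbr ▸ List.drop_sublist m rest
    simp only [p, hbr, List.headI_cons, List.tail_cons] at ih ⊢
    obtain ⟨hnn, hsum, hlen⟩ := ih fun t ht => hrest t (hsub.subset ht)
    have := hsub.sum_le_sum hrest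
    have := hsub.length_le
    simp only [List.forall_mem_cons, List.sum_cons, List.length_cons] at *
    exact ⟨⟨ha, hnn⟩, by linarith, by omega⟩
  | case6 fuel a rest m r hr _ ih =>
    obtain ⟨ha, hrest⟩ := List.forall_mem_cons.1 hl
    obtain ⟨b, rt, hbr⟩ := List.exists_cons_of_ne_nil hr
    have hsub : List.Sublist (b :: rt) rest := hbr ▸ List.drop_sublist m rest
    have hb := hrest b (hsub.subset List.mem_cons_self)
    simp only [hbr, List.headI_cons, List.tail_cons] at ih ⊢
    obtain ⟨hnn, hsum, hlen⟩ := ih (List.forall_mem_cons.2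
      ⟨add_nonneg ha hb, fun t ht => hrest t (hsub.subset (.tail _ ht))⟩)
    have := hsub.sum_le_sum hrest
    have := hsub.length_le
    simp only [List.sum_cons, List.length_cons] at *
    exact ⟨hnn, by linarith, by omega⟩

theorem contract_fst_spec (y : List ℝ) (hy : ∀ t ∈ y, 0 ≤ t) :
    (∀ t ∈ (contract y).1, 0 ≤ t) ∧ (contract y).1.sum ≤ y.sum ∧
      (contract y).1.length ≤ y.length := by
  have hsub := List.drop_sublist (y.takeWhile fun t => decide (t = 0)).length y
  obtain ⟨hnn, hsum, hlen⟩ := squashF_fst_spec _ _ fun t ht => hy t (hsub.subset ht)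
  exact ⟨hnn, hsum.trans (hsub.sum_le_sum hy), hlen.trans hsub.length_le⟩

theorem minL_le_of_mem {l : List ℝ} {a : ℝ} (h : a ∈ l) : minL l ≤ a := by
  unfold minL
  generalize l.headI = b
  induction l with
  | nil => cases h
  | cons c t ih =>
    rcases List.mem_cons.1 h with rfl | h
    · exact min_le_left _ _
    · exact (min_le_right _ _).trans (ih h)

theorem minL_nonneg {l : List ℝ} (hl : ∀ t ∈ l, 0 ≤ t) : 0 ≤ minL l := by
  have hb : 0 ≤ l.headI := by
    cases l with
    | nil => exact le_rfl
    | cons a t => exact hl a List.mem_cons_self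
  unfold minL
  generalize l.headI = b at hb
  induction l with
  | nil => exact hb
  | cons c t ih => exact le_min (hl c List.mem_cons_self) (ih fun t ht => hl t (.tail _ ht))

theorem map_sub_minL_nonneg (z : List ℝ) : ∀ t ∈ z.map (· - minL z), 0 ≤ t := by
  simpa using fun t ht => minL_le_of_mem ht

theorem stepB_spec (z : List ℝ) :
    (∀ t ∈ stepB z, 0 ≤ t) ∧ (stepB z).sum ≤ z.sum - z.length * minL z ∧
      (stepB z).length ≤ z.length := by
  simpa [stepB, List.sum_map_sub_const] using contract_fst_spec _ (map_sub_minL_nonneg z)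

section iterB

variable (x : List ℝ)

theorem iterB_nonneg (hx : ∀ t ∈ x, 0 ≤ t) : ∀ i, ∀ t ∈ iterB x i, 0 ≤ t
  | 0 => hx
  | _ + 1 => (stepB_spec _).1

theorem antitone_length_iterB : Antitone fun i => (iterB x i).length :=
  antitone_nat_of_succ_le fun _ => (stepB_spec _).2.2

theorem sum_iterB_le (i : ℕ) :
    (iterB x i).sum ≤ x.sum - ∑ j ∈ range i, (iterB x j).length * minL (iterB x j) := by
  induction i with
  | zero => simp [iterB]
  | succ i ih =>
    rw [iterB, sum_range_succ]
    linarith [(stepB_spec (iterB x i)).2.1]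

theorem sum_yI_le {i : ℕ} (hi : 1 ≤ i) :
    (yI x i).sum ≤ x.sum - ∑ j ∈ range i, (iterB x j).length * minL (iterB x j) := by
  obtain ⟨i, rfl⟩ : ∃ j, i = j + 1 := ⟨i - 1, by omega⟩
  simp only [yI, muI, Nat.add_sub_cancel, List.sum_map_sub_const, sum_range_succ]
  linarith [sum_iterB_le x i]

theorem two_mul_sum_min_lamI_mul_nuI_le (hx : ∀ t ∈ x, 0 ≤ t) (i : ℕ) :
    2 * ∑ k ∈ Icc 1 (uSteps x), min (lamI x i) (lamI x k) * (nuI x k : ℝ)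
      ≤ ∑ j ∈ range i, (iterB x j).length * minL (iterB x j) := by
  have hm : ∀ j, 0 ≤ minL (iterB x j) := fun j => minL_nonneg (iterB_nonneg x hx j)
  have hn : Antitone fun j => (iterB x j).length / 2 := fun a b hab =>
    Nat.div_le_div_right (antitone_length_iterB x hab)
  calc _ ≤ 2 * ∑ j ∈ range i, minL (iterB x j) * ((iterB x j).length / 2 : ℕ) :=
        mul_le_mul_of_nonneg_left (sum_min_partialSum_mul_tsub_le hm hn i (uSteps x)) zero_le_two
    _ ≤ _ := by
        rw [mul_sum]
        refine sum_le_sum fun j _ => ?_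
        have : (2 * ((iterB x j).length / 2 : ℕ) : ℝ) ≤ (iterB x j).length := by
          exact_mod_cast Nat.mul_div_le _ 2
        nlinarith [hm j]

end iterB

theorem quantum_numbers_bounded_general (L : ℝ) (x : List ℝ)
    (hpos : ∀ t ∈ x, 0 < t)
    (hsum : x.sum ≤ L) :
    ∀ i, 1 ≤ i → i ≤ uSteps x → ∀ p ∈ runStarts (yI x i),
      0 ≤ ((yI x i).take p).sum ∧ ((yI x i).take p).sum ≤ vacancy x L i := by
  intro i hi _ p _
  have hx : ∀ t ∈ x, 0 ≤ t := fun t ht => (hpos t ht).le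
  have hy : ∀ t ∈ yI x i, 0 ≤ t := map_sub_minL_nonneg _
  have htake := (List.take_sublist p (yI x i)).sum_le_sum hy
  refine ⟨List.sum_nonneg fun t ht => hy t (List.take_subset _ _ ht), ?_⟩
  rw [vacancy]
  linarith [sum_yI_le x hi, two_mul_sum_min_lamI_mul_nuI_le x hx i]

/-- Each quantum number `r⁽ⁱ⁾_j = ∑_{l < I⁽ⁱ⁾_j} y⁽ⁱ⁾_l` (the sum of the entries of
`y⁽ⁱ⁾` preceding the `j`-th run of zeros) lies between `0` and the vacancy number
`q_i`. -/
theorem quantum_numbers_bounded (N : ℕ) (hN : 1 ≤ N) (L : ℝ) (x : List ℝ)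
    (hlen : x.length = 2 * N) (hpos : ∀ t ∈ x, 0 < t) (hhwc : HWC x)
    (hsum : x.sum ≤ L) :
    ∀ i, 1 ≤ i → i ≤ uSteps x → ∀ p ∈ runStarts (yI x i),
      0 ≤ ((yI x i).take p).sum ∧ ((yI x i).take p).sum ≤ vacancy x L i :=
  quantum_numbers_bounded_general L x hpos hsum
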